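/- Let F and G be distributions with continuous quantile functions. Then F is larger than G in weak dispersive order (F^{-1}(τ) − F^{-1}(1−τ) ≥ G^{-1}(τ) − G^{-1}(1−τ) for all 0.5 < τ < 1) if and only if Disp_-^{AVM}(F,G) = 0. -/

import Mathlib

/-!
The integrand of `Disp₊^AVM(G, F)` is nonnegative and, when the quantile functions are
continuous, continuous on `(0, 1)`; so the integral vanishes iff the integrand vanishes
everywhere on `(0, 1)`. Under the substitution `α = 2τ - 1` the integrand vanishes at `α`
exactly when the weak dispersive inequality holds at `τ`.
-/

open MeasureTheory
open scoped ENNReal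

/-- `Disp₊^AVM` component, as a lower Lebesgue integral. -/
noncomputable def avmDispPlusL (qF qG : ℝ → ℝ) : ℝ≥0∞ :=
  (1 / 2 : ℝ≥0∞) * ∫⁻ α in Set.Ioo (0:ℝ) 1,
    ENNReal.ofReal (max ((qF ((1 + α) / 2) - qG ((1 + α) / 2)) -
                         (qF ((1 - α) / 2) - qG ((1 - α) / 2))) 0)

theorem MeasureTheory.setLIntegral_eq_zero_iff_eqOn_of_continuousOn {X : Type*}
    [TopologicalSpace X] [MeasurableSpace X] [OpensMeasurableSpace X] {μ : Measure X}
    [μ.IsOpenPosMeasure] {f : X → ℝ≥0∞} {U : Set X} (hU : IsOpen U) (hf : ContinuousOn f U) :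
    ∫⁻ x in U, f x ∂μ = 0 ↔ Set.EqOn f 0 U := by
  refine ⟨fun h => ?_, fun h => ?_⟩
  · have hae : f =ᵐ[μ.restrict U] 0 :=
      (lintegral_eq_zero_iff' (hf.aemeasurable hU.measurableSet)).mp h
    exact μ.eqOn_open_of_ae_eq hae hU hf continuousOn_const
  · rw [setLIntegral_congr_fun hU.measurableSet h]
    exact lintegral_zero

noncomputable def avmIntegrand (qF qG : ℝ → ℝ) (α : ℝ) : ℝ≥0∞ :=
  ENNReal.ofReal (max ((qF ((1 + α) / 2) - qG ((1 + α) / 2)) -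
                       (qF ((1 - α) / 2) - qG ((1 - α) / 2))) 0)

section AvmIntegrand

variable {qF qG : ℝ → ℝ}

theorem avmDispPlusL_eq_zero_iff :
    avmDispPlusL qF qG = 0 ↔ ∫⁻ α in Set.Ioo (0:ℝ) 1, avmIntegrand qF qG α = 0 := by
  simp [avmDispPlusL, avmIntegrand]

theorem avmIntegrand_eq_zero_iff (α : ℝ) :
    avmIntegrand qF qG α = 0 ↔
      qF ((1 + α) / 2) - qF ((1 - α) / 2) ≤ qG ((1 + α) / 2) - qG ((1 - α) / 2) := by
  rw [avmIntegrand, ENNReal.ofReal_eq_zero, max_le_iff]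
  constructor
  · rintro ⟨h, -⟩
    linarith
  · intro h
    exact ⟨by linarith, le_rfl⟩

theorem continuousOn_avmIntegrand (hFc : ContinuousOn qF (Set.Ioo 0 1))
    (hGc : ContinuousOn qG (Set.Ioo 0 1)) :
    ContinuousOn (avmIntegrand qF qG) (Set.Ioo 0 1) := by
  have hup : Set.MapsTo (fun α : ℝ => (1 + α) / 2) (Set.Ioo 0 1) (Set.Ioo 0 1) :=
    fun α hα => ⟨by linarith [hα.1], by linarith [hα.2]⟩
  have hdown : Set.MapsTo (fun α : ℝ => (1 - α) / 2) (Set.Ioo 0 1) (Set.Ioo 0 1) :=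
    fun α hα => ⟨by linarith [hα.2], by linarith [hα.1]⟩
  have hup_c : Continuous fun α : ℝ => (1 + α) / 2 := by fun_prop
  have hdown_c : Continuous fun α : ℝ => (1 - α) / 2 := by fun_prop
  refine ENNReal.continuous_ofReal.comp_continuousOn (ContinuousOn.sup ?_ continuousOn_const)
  exact ((hFc.comp hup_c.continuousOn hup).sub (hGc.comp hup_c.continuousOn hup)).sub
    ((hFc.comp hdown_c.continuousOn hdown).sub (hGc.comp hdown_c.continuousOn hdown))

end AvmIntegrand

theorem weak_dispersive_iff_disp_minus_zero_general (qF qG : ℝ → ℝ)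
    (hFc : ContinuousOn qF (Set.Ioo 0 1)) (hGc : ContinuousOn qG (Set.Ioo 0 1)) :
    (∀ τ : ℝ, 1 / 2 < τ → τ < 1 →
        qG τ - qG (1 - τ) ≤ qF τ - qF (1 - τ)) ↔
      avmDispPlusL qG qF = 0 := by
  rw [avmDispPlusL_eq_zero_iff, setLIntegral_eq_zero_iff_eqOn_of_continuousOn isOpen_Ioo
    (continuousOn_avmIntegrand hGc hFc)]
  refine ⟨fun h α hα => (avmIntegrand_eq_zero_iff α).2 ?_, fun h τ hτ₁ hτ₂ => ?_⟩
  · have := h ((1 + α) / 2) (by linarith [hα.1]) (by linarith [hα.2])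
    rwa [show 1 - (1 + α) / 2 = (1 - α) / 2 by ring] at this
  · have := (avmIntegrand_eq_zero_iff (2 * τ - 1)).1
      (h ⟨by linarith, by linarith⟩ : avmIntegrand qG qF (2 * τ - 1) = 0)
    rwa [show (1 + (2 * τ - 1)) / 2 = τ by ring,
      show (1 - (2 * τ - 1)) / 2 = 1 - τ by ring] at this

/-- For distributions with continuous quantile functions, `F` is larger than
`G` in weak dispersive order iff `Disp₋^AVM(F,G) = Disp₊^AVM(G,F) = 0`. -/
theorem weak_dispersive_iff_disp_minus_zero (qF qG : ℝ → ℝ)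
    (hF : MonotoneOn qF (Set.Ioo 0 1)) (hG : MonotoneOn qG (Set.Ioo 0 1))
    (hFc : ContinuousOn qF (Set.Ioo 0 1)) (hGc : ContinuousOn qG (Set.Ioo 0 1)) :
    (∀ τ : ℝ, 1 / 2 < τ → τ < 1 →
        qG τ - qG (1 - τ) ≤ qF τ - qF (1 - τ)) ↔
      avmDispPlusL qG qF = 0 :=
  weak_dispersive_iff_disp_minus_zero_general qF qG hFc hGc
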